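/- Gauss's summation theorem: for complex a, b, c with Re(c − a − b) > 0 and c not a nonpositive integer, ∑_{n=0}^∞ (a)_n(b)_n/(n!(c)_n) = Γ(c)Γ(c−a−b)/(Γ(c−a)Γ(c−b)). -/

import Mathlib

/-- The Pochhammer symbol (rising factorial) (a)_n. -/
noncomputable def poch (a : ℂ) (n : ℕ) : ℂ := (ascPochhammer ℂ n).eval a

/-!
Write `F(c) = ∑ tₙ` with `tₙ = (a)ₙ (b)ₙ / (n! (c)ₙ)`. Euler's product
`Γ(z) = lim m^z m! / (z)_{m+1}` shows `(n + 1) t_{n+1} = n^{a+b-c} · Γₙ(c) / (Γₙ(a) Γₙ(b))`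
with convergent Euler factors `Γₙ`, so `n tₙ = O(n^{-Re(c-a-b)})`: the series converges and
`n tₙ → 0`. Comparing consecutive terms, `c (c-a-b) tₙ(c) - (c-a)(c-b) tₙ(c+1)` telescopes in
`c n tₙ(c)`, giving the contiguous relation `c (c-a-b) F(c) = (c-a)(c-b) F(c+1)`, hence
`(c)ₘ (c-a-b)ₘ F(c) = (c-a)ₘ (c-b)ₘ F(c+m)`. By dominated convergence `F(c+m) → 1`, and Euler's
product turns the Pochhammer ratio into `Γ(c) Γ(c-a-b) / (Γ(c-a) Γ(c-b))` as `m → ∞`.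
If `c - a` or `c - b` is a nonpositive integer, the right factor vanishes for large `m`, so
`F(c) = 0`, matching the right-hand side under the convention `x / 0 = 0`.
-/

open Filter Topology Asymptotics Nat Complex

lemma poch_zero (a : ℂ) : poch a 0 = 1 := by
  simp [poch]

lemma poch_succ (a : ℂ) (n : ℕ) : poch a (n + 1) = poch a n * (a + n) := by
  simp [poch, ascPochhammer_succ_eval]

lemma poch_succ_left (a : ℂ) (n : ℕ) : poch a (n + 1) = a * poch (a + 1) n := by
  simp [poch, ascPochhammer_succ_left, Polynomial.eval_comp]

lemma poch_eq_prod (a : ℂ) (n : ℕ) : poch a n = ∏ j ∈ Finset.range n, (a + j) := by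
  induction n with
  | zero => simp [poch_zero]
  | succ n ih => rw [poch_succ, Finset.prod_range_succ, ih]

lemma poch_ne_zero {a : ℂ} (ha : ∀ k : ℕ, a ≠ -k) (n : ℕ) : poch a n ≠ 0 := by
  rw [poch_eq_prod]
  exact Finset.prod_ne_zero_iff.2 fun j _ h => ha j (eq_neg_of_add_eq_zero_left h)

lemma poch_neg_natCast {k n : ℕ} (h : k < n) : poch (-k) n = 0 := by
  rw [poch_eq_prod]
  exact Finset.prod_eq_zero (Finset.mem_range.2 h) (neg_add_cancel _)

lemma norm_poch_le_norm_poch {z w : ℂ} (h : ∀ j : ℕ, ‖z + j‖ ≤ ‖w + j‖) (n : ℕ) :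
    ‖poch z n‖ ≤ ‖poch w n‖ := by
  simp only [poch_eq_prod, norm_prod]
  exact Finset.prod_le_prod (fun _ _ => norm_nonneg _) fun j _ => h j

lemma add_natCast_ne_neg_natCast {c : ℂ} (hc : ∀ k : ℕ, c ≠ -k) (m : ℕ) :
    ∀ k : ℕ, c + m ≠ -k := fun k h => hc (k + m) (by push_cast; linear_combination h)

lemma ne_neg_natCast_of_re_pos {z : ℂ} (hz : 0 < z.re) : ∀ k : ℕ, z ≠ -k := by
  rintro k rfl
  simp only [neg_re, natCast_re, Left.neg_pos_iff] at hz
  exact (k.cast_nonneg.not_gt hz)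

lemma GammaSeq_eq_div_poch (z : ℂ) (n : ℕ) : GammaSeq z n = n ^ z * n ! / poch z (n + 1) := by
  rw [GammaSeq, poch_eq_prod]

noncomputable def hypergeomTerm (a b c : ℂ) (n : ℕ) : ℂ :=
  poch a n * poch b n / (n ! * poch c n)

lemma hypergeomTerm_zero (a b c : ℂ) : hypergeomTerm a b c 0 = 1 := by
  simp [hypergeomTerm, poch_zero]

lemma hypergeomTerm_comm (a b c : ℂ) : hypergeomTerm a b c = hypergeomTerm b a c := by
  ext n
  rw [hypergeomTerm, hypergeomTerm, mul_comm (poch a n)]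

lemma hypergeomTerm_neg_natCast {k n : ℕ} (h : k < n) (b c : ℂ) :
    hypergeomTerm (-k) b c n = 0 := by
  rw [hypergeomTerm, poch_neg_natCast h, zero_mul, zero_div]

lemma hypergeomTerm_succ_mul {c : ℂ} (hc : ∀ k : ℕ, c ≠ -k) (a b : ℂ) (n : ℕ) :
    hypergeomTerm a b c (n + 1) * ((n + 1) * (c + n))
      = hypergeomTerm a b c n * ((a + n) * (b + n)) := by
  have hcn : c + n ≠ 0 := fun h => hc n (eq_neg_of_add_eq_zero_left h)
  have := poch_ne_zero hc n
  simp only [hypergeomTerm, poch_succ, factorial_succ, cast_mul, cast_add, cast_one]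
  field_simp

lemma add_natCast_mul_hypergeomTerm_add_one {c : ℂ} (hc : ∀ k : ℕ, c ≠ -k) (a b : ℂ)
    (n : ℕ) :
    (c + n) * hypergeomTerm a b (c + 1) n = c * hypergeomTerm a b c n := by
  have := poch_ne_zero hc n
  have := poch_ne_zero (by simpa using add_natCast_ne_neg_natCast hc 1) n
  have : (n ! : ℂ) ≠ 0 := by exact_mod_cast factorial_ne_zero n
  have h := poch_succ_left c n
  rw [poch_succ] at h
  simp only [hypergeomTerm]
  field_simp
  linear_combination (poch a n * poch b n) * h

lemma succ_mul_hypergeomTerm_succ {a b c : ℂ} (ha : ∀ k : ℕ, a ≠ -k) (hb : ∀ k : ℕ, b ≠ -k)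
    (hc : ∀ k : ℕ, c ≠ -k) {n : ℕ} (hn : n ≠ 0) :
    (n + 1) * hypergeomTerm a b c (n + 1)
      = n ^ (a + b - c) * (GammaSeq c n / (GammaSeq a n * GammaSeq b n)) := by
  have hn' : (n : ℂ) ≠ 0 := by exact_mod_cast hn
  have := poch_ne_zero ha (n + 1)
  have := poch_ne_zero hb (n + 1)
  have := poch_ne_zero hc (n + 1)
  have : (n ! : ℂ) ≠ 0 := by exact_mod_cast factorial_ne_zero n
  have : (n : ℂ) + 1 ≠ 0 := by exact_mod_cast succ_ne_zero n
  have hpow (z : ℂ) : (n : ℂ) ^ z ≠ 0 := cpow_ne_zero_iff.2 (Or.inl hn')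
  simp only [hypergeomTerm, GammaSeq_eq_div_poch, cpow_sub _ _ hn', cpow_add _ _ hn',
    factorial_succ, cast_mul, cast_add, cast_one]
  field_simp [hpow a, hpow b, hpow c]

lemma isBigO_succ_mul_hypergeomTerm_succ {c : ℂ} (hc : ∀ k : ℕ, c ≠ -k) (a b : ℂ) :
    (fun n : ℕ => (n + 1) * hypergeomTerm a b c (n + 1)) =O[atTop]
      fun n : ℕ => (n : ℝ) ^ (-(c - a - b).re) := by
  by_cases hab : (∃ k : ℕ, a = -k) ∨ ∃ k : ℕ, b = -k
  · refine (isBigO_zero _ _).congr' ?_ EventuallyEq.rfl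
    obtain ⟨k, rfl⟩ | ⟨k, rfl⟩ := hab
    all_goals
      filter_upwards [eventually_ge_atTop k] with n hn
    · rw [hypergeomTerm_neg_natCast (by omega), mul_zero]
    · rw [hypergeomTerm_comm, hypergeomTerm_neg_natCast (by omega), mul_zero]
  push Not at hab
  obtain ⟨ha, hb⟩ := hab
  have hpow : (fun n : ℕ => (n : ℂ) ^ (a + b - c)) =O[atTop]
      fun n : ℕ => (n : ℝ) ^ (-(c - a - b).re) := by
    refine IsBigO.of_bound' ?_
    filter_upwards [eventually_gt_atTop 0] with n hn
    rw [norm_natCast_cpow_of_pos hn, Real.norm_of_nonneg (by positivity)]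
    apply le_of_eq
    congr 1
    simp only [sub_re, add_re]
    ring
  have hratio := ((GammaSeq_tendsto_Gamma c).div
    ((GammaSeq_tendsto_Gamma a).mul (GammaSeq_tendsto_Gamma b))
    (mul_ne_zero (Gamma_ne_zero ha) (Gamma_ne_zero hb))).isBigO_one ℝ
  refine (hpow.mul hratio).congr' ?_ (by simp)
  filter_upwards [eventually_ne_atTop 0] with n hn
  exact (succ_mul_hypergeomTerm_succ ha hb hc hn).symm

lemma summable_hypergeomTerm {a b c : ℂ} (hc : ∀ k : ℕ, c ≠ -k) (h : 0 < (c - a - b).re) :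
    Summable (hypergeomTerm a b c) := by
  rw [← summable_nat_add_iff 1]
  have hinv : (fun n : ℕ => ((n : ℂ) + 1)⁻¹) =O[atTop] fun n : ℕ => (n : ℝ) ^ (-1 : ℝ) := by
    refine IsBigO.of_bound' ?_
    filter_upwards [eventually_gt_atTop 0] with n hn
    rw [Real.rpow_neg_one, norm_inv, norm_inv, Real.norm_natCast]
    have : ‖(n : ℂ) + 1‖ = n + 1 := by exact_mod_cast Complex.norm_natCast (n + 1)
    rw [this]
    gcongr
    linarith
  refine summable_of_isBigO_nat
    (Real.summable_nat_rpow.2 (by linarith : -1 + -(c - a - b).re < -1))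
    ((hinv.mul (isBigO_succ_mul_hypergeomTerm_succ hc a b)).congr' ?_ ?_)
  · refine Eventually.of_forall fun n => ?_
    simp only
    rw [inv_mul_cancel_left₀ (by exact_mod_cast succ_ne_zero n)]
  · filter_upwards [eventually_gt_atTop 0] with n hn
    rw [Real.rpow_add (by exact_mod_cast hn)]

lemma tendsto_natCast_mul_hypergeomTerm {a b c : ℂ} (hc : ∀ k : ℕ, c ≠ -k)
    (h : 0 < (c - a - b).re) :
    Tendsto (fun n : ℕ => n * hypergeomTerm a b c n) atTop (𝓝 0) := by
  rw [← tendsto_add_atTop_iff_nat 1]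
  have := (isBigO_succ_mul_hypergeomTerm_succ hc a b).trans_tendsto
    ((tendsto_rpow_neg_atTop h).comp tendsto_natCast_atTop_atTop)
  simpa using this

lemma hypergeomTerm_contiguous {c : ℂ} (hc : ∀ k : ℕ, c ≠ -k) (a b : ℂ) (n : ℕ) :
    c * (c - a - b) * hypergeomTerm a b c n - (c - a) * (c - b) * hypergeomTerm a b (c + 1) n
      = c * (n * hypergeomTerm a b c n - (n + 1 : ℕ) * hypergeomTerm a b c (n + 1)) := by
  have hcn : c + n ≠ 0 := fun h => hc n (eq_neg_of_add_eq_zero_left h)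
  refine mul_left_cancel₀ hcn ?_
  push_cast
  linear_combination c * hypergeomTerm_succ_mul hc a b n
    - (c - a) * (c - b) * add_natCast_mul_hypergeomTerm_add_one hc a b n

lemma mul_tsum_hypergeomTerm_eq {a b c : ℂ} (hc : ∀ k : ℕ, c ≠ -k) (h : 0 < (c - a - b).re) :
    c * (c - a - b) * ∑' n, hypergeomTerm a b c n
      = (c - a) * (c - b) * ∑' n, hypergeomTerm a b (c + 1) n := by
  have hc1 : ∀ k : ℕ, c + 1 ≠ -k := by simpa using add_natCast_ne_neg_natCast hc 1
  have h1 : 0 < (c + 1 - a - b).re := by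
    rw [show c + 1 - a - b = c - a - b + 1 by ring, add_re, one_re]
    linarith
  have hsum := ((summable_hypergeomTerm hc h).hasSum.mul_left (c * (c - a - b))).sub
    ((summable_hypergeomTerm hc1 h1).hasSum.mul_left ((c - a) * (c - b)))
  have htel : Tendsto (fun N => ∑ n ∈ Finset.range N, (c * (c - a - b) * hypergeomTerm a b c n
      - (c - a) * (c - b) * hypergeomTerm a b (c + 1) n)) atTop (𝓝 0) := by
    simp_rw [hypergeomTerm_contiguous hc, ← Finset.mul_sum,
      Finset.sum_range_sub' (fun n : ℕ => (n : ℂ) * hypergeomTerm a b c n)]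
    simpa using ((tendsto_natCast_mul_hypergeomTerm hc h).const_sub 0).const_mul c
  exact sub_eq_zero.1 (tendsto_nhds_unique hsum.tendsto_sum_nat htel)

lemma poch_mul_tsum_hypergeomTerm_eq {a b c : ℂ} (hc : ∀ k : ℕ, c ≠ -k)
    (h : 0 < (c - a - b).re) (m : ℕ) :
    poch c m * poch (c - a - b) m * ∑' n, hypergeomTerm a b c n
      = poch (c - a) m * poch (c - b) m * ∑' n, hypergeomTerm a b (c + m) n := by
  induction m with
  | zero => simp [poch_zero]
  | succ m ih =>
    have hm : 0 < (c + m - a - b).re := by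
      rw [show c + m - a - b = c - a - b + m by ring, add_re, natCast_re]
      positivity
    have step := mul_tsum_hypergeomTerm_eq (add_natCast_ne_neg_natCast hc m) hm
    simp only [poch_succ, cast_add, cast_one, ← add_assoc]
    linear_combination (c + m) * (c - a - b + m) * ih + poch (c - a) m * poch (c - b) m * step

lemma natCast_sub_norm_le_norm_add (c : ℂ) (n : ℕ) : (n : ℝ) - ‖c‖ ≤ ‖c + n‖ := by
  simpa [add_comm] using norm_sub_norm_le (n : ℂ) (-c)

lemma norm_add_natCast_le (z : ℂ) (j : ℕ) : ‖z + j‖ ≤ ‖(‖z‖ : ℂ) + j‖ := by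
  rw [← ofReal_natCast, ← ofReal_add, norm_real, Real.norm_of_nonneg (by positivity)]
  simpa using norm_add_le z j

lemma tendsto_hypergeomTerm_add_natCast (a b c : ℂ) (k : ℕ) :
    Tendsto (fun m : ℕ => hypergeomTerm a b (c + m) k) atTop (𝓝 (if k = 0 then 1 else 0)) := by
  rcases k with _ | k
  · simp [hypergeomTerm_zero]
  have hpoch : Tendsto (fun m : ℕ => ‖poch (c + m) (k + 1)‖) atTop atTop :=
    Polynomial.tendsto_norm_atTop _
      (Polynomial.natDegree_pos_iff_degree_pos.1 (by rw [ascPochhammer_natDegree]; omega))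
      (tendsto_atTop_mono (natCast_sub_norm_le_norm_add c)
        (tendsto_atTop_add_const_right _ _ tendsto_natCast_atTop_atTop))
  have hinv : Tendsto (fun m : ℕ => (poch (c + m) (k + 1))⁻¹) atTop (𝓝 0) := by
    rw [tendsto_zero_iff_norm_tendsto_zero]
    simp only [norm_inv]
    exact tendsto_inv_atTop_zero.comp hpoch
  convert hinv.const_mul (poch a (k + 1) * poch b (k + 1) / ((k + 1) ! : ℂ)) using 1
  · ext m
    simp only [hypergeomTerm]
    ring
  · simp

lemma norm_hypergeomTerm_add_natCast_le (a b c : ℂ) {M m : ℕ} (hM : 0 < M)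
    (hm : M + ‖c‖ ≤ m) (k : ℕ) :
    ‖hypergeomTerm a b (c + m) k‖ ≤ ‖hypergeomTerm ‖a‖ ‖b‖ M k‖ := by
  have hM0 : ∀ j : ℕ, (M : ℂ) ≠ -j := ne_neg_natCast_of_re_pos (by simpa using hM)
  have hcm (j : ℕ) : ‖(M : ℂ) + j‖ ≤ ‖c + m + j‖ := by
    have := natCast_sub_norm_le_norm_add c (m + j)
    rw [add_assoc, ← cast_add, ← cast_add, Complex.norm_natCast]
    push_cast at this ⊢
    linarith
  simp only [hypergeomTerm, norm_div, norm_mul, Complex.norm_natCast]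
  gcongr
  · exact mul_pos (by positivity) (norm_pos_iff.2 (poch_ne_zero hM0 k))
  · exact norm_poch_le_norm_poch (norm_add_natCast_le a) k
  · exact norm_poch_le_norm_poch (norm_add_natCast_le b) k
  · exact norm_poch_le_norm_poch hcm k

lemma tendsto_tsum_hypergeomTerm_add_natCast (a b c : ℂ) :
    Tendsto (fun m : ℕ => ∑' n, hypergeomTerm a b (c + m) n) atTop (𝓝 1) := by
  obtain ⟨M, hM⟩ := exists_nat_gt (‖a‖ + ‖b‖)
  have hM0 : (0 : ℝ) < M := by linarith [norm_nonneg a, norm_nonneg b]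
  have hsum : Summable (hypergeomTerm ‖a‖ ‖b‖ M) :=
    summable_hypergeomTerm (ne_neg_natCast_of_re_pos (by simpa using hM0)) (by simp; linarith)
  have hbound : ∀ᶠ m : ℕ in atTop, ∀ k, ‖hypergeomTerm a b (c + m) k‖
      ≤ ‖hypergeomTerm ‖a‖ ‖b‖ M k‖ := by
    filter_upwards [tendsto_natCast_atTop_atTop.eventually_ge_atTop ((M : ℝ) + ‖c‖)] with m hm
    exact norm_hypergeomTerm_add_natCast_le a b c (by exact_mod_cast hM0) hm
  simpa using tendsto_tsum_of_dominated_convergence hsum.norm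
    (tendsto_hypergeomTerm_add_natCast a b c) hbound

lemma tsum_hypergeomTerm_eq_zero {a b c : ℂ} (hc : ∀ k : ℕ, c ≠ -k) (h : 0 < (c - a - b).re)
    {j : ℕ} (hj : c - a = -j) : ∑' n, hypergeomTerm a b c n = 0 := by
  have key := poch_mul_tsum_hypergeomTerm_eq hc h (j + 1)
  rw [show poch (c - a) (j + 1) = 0 by rw [hj]; exact poch_neg_natCast (lt_add_one j),
    zero_mul, zero_mul] at key
  exact (mul_eq_zero.1 key).resolve_left
    (mul_ne_zero (poch_ne_zero hc _) (poch_ne_zero (ne_neg_natCast_of_re_pos h) _))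

lemma tsum_hypergeomTerm_mul_GammaSeq {a b c : ℂ} (hc : ∀ k : ℕ, c ≠ -k)
    (h : 0 < (c - a - b).re) (hca : ∀ k : ℕ, c - a ≠ -k) (hcb : ∀ k : ℕ, c - b ≠ -k)
    {m : ℕ} (hm : m ≠ 0) :
    (∑' n, hypergeomTerm a b c n) * (GammaSeq (c - a) m * GammaSeq (c - b) m)
      = GammaSeq c m * GammaSeq (c - a - b) m
        * ∑' n, hypergeomTerm a b (c + (m + 1 : ℕ)) n := by
  have key := poch_mul_tsum_hypergeomTerm_eq hc h (m + 1)
  set T := ∑' n, hypergeomTerm a b (c + (m + 1 : ℕ)) n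
  have hm' : (m : ℂ) ≠ 0 := by exact_mod_cast hm
  have := poch_ne_zero hc (m + 1)
  have := poch_ne_zero (ne_neg_natCast_of_re_pos h) (m + 1)
  have := poch_ne_zero hca (m + 1)
  have := poch_ne_zero hcb (m + 1)
  have hpow : (m : ℂ) ^ c * (m : ℂ) ^ (c - a - b) = (m : ℂ) ^ (c - a) * (m : ℂ) ^ (c - b) := by
    rw [← cpow_add _ _ hm', ← cpow_add _ _ hm']
    ring_nf
  simp only [GammaSeq_eq_div_poch]
  field_simp
  linear_combination (m ! : ℂ) ^ 2 * (m : ℂ) ^ (c - a) * (m : ℂ) ^ (c - b) * key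
    - (m ! : ℂ) ^ 2 * poch (c - a) (m + 1) * poch (c - b) (m + 1) * T * hpow

/-- Gauss's summation theorem for the ₂F₁ series at 1. -/
theorem gauss_summation (a b c : ℂ) (h : 0 < (c - a - b).re)
    (hc : ∀ n : ℕ, c ≠ -(n : ℂ)) :
    ∑' n : ℕ, poch a n * poch b n / ((Nat.factorial n : ℂ) * poch c n)
      = Complex.Gamma c * Complex.Gamma (c - a - b)
          / (Complex.Gamma (c - a) * Complex.Gamma (c - b)) := by
  change ∑' n, hypergeomTerm a b c n = _
  by_cases hca : ∃ j : ℕ, c - a = -j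
  · obtain ⟨j, hj⟩ := hca
    rw [tsum_hypergeomTerm_eq_zero hc h hj, (Gamma_eq_zero_iff _).2 ⟨j, hj⟩, zero_mul,
      div_zero]
  by_cases hcb : ∃ j : ℕ, c - b = -j
  · obtain ⟨j, hj⟩ := hcb
    rw [hypergeomTerm_comm, tsum_hypergeomTerm_eq_zero hc (by rwa [sub_right_comm]) hj,
      (Gamma_eq_zero_iff _).2 ⟨j, hj⟩, mul_zero, div_zero]
  push Not at hca hcb
  rw [eq_div_iff (mul_ne_zero (Gamma_ne_zero hca) (Gamma_ne_zero hcb))]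
  have hlhs := (tendsto_const_nhds (x := ∑' n, hypergeomTerm a b c n)).mul
    ((GammaSeq_tendsto_Gamma (c - a)).mul (GammaSeq_tendsto_Gamma (c - b)))
  have hrhs := ((GammaSeq_tendsto_Gamma c).mul (GammaSeq_tendsto_Gamma (c - a - b))).mul
    ((tendsto_add_atTop_iff_nat 1).2 (tendsto_tsum_hypergeomTerm_add_natCast a b c))
  rw [mul_one] at hrhs
  refine tendsto_nhds_unique (hlhs.congr' ?_) hrhs
  filter_upwards [eventually_ne_atTop 0] with m hm
  exact tsum_hypergeomTerm_mul_GammaSeq hc h hca hcb hm
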